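/- arXiv:1902.07896 — 3 statements merged into one kernel-verified Lean document; each statement's English description precedes it below -/
import Mathlib

section
/- Let ρ be the ReLU activation function, and let Φ¹ and Φ² be neural networks with L₁ and L₂ layers respectively, such that the input dimension of Φ¹ equals the output dimension of Φ². Then there exists a neural network Φ¹⊙Φ² (the sparse concatenation) whose input dimension equals that of Φ² and whose output dimension equals that of Φ¹, such that R_ρ(Φ¹⊙Φ²)(x) = R_ρ(Φ¹)(R_ρ(Φ²)(x)) for all x, with L(Φ¹⊙Φ²) = L₁ + L₂, M(Φ¹⊙Φ²) ≤ 2·M(Φ¹) + 2·M(Φ²), and N(Φ¹⊙Φ²) ≤ 2·N(Φ¹) + 2·N(Φ²). -/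
noncomputable section

open Finset

/-- The ReLU activation function `x ↦ max 0 x`. -/
def relu (x : ℝ) : ℝ := max 0 x

/-- A feedforward neural network with possible skip connections.
The entry `A l k i j` is the weight connecting neuron `j` of layer `k` to neuron `i` of
layer `l` (meaningful for `1 ≤ l ≤ L`, `k < l`, `i < arity l`, `j < arity k`), and
`b l i` is the bias of neuron `i` of layer `l`.  Entries outside the meaningful ranges
are irrelevant: they influence neither the realization nor the complexity counts. -/
structure NN where
  d : ℕ
  L : ℕ
  hL : 0 < L
  arity : ℕ → ℕ
  harity : arity 0 = d
  A : ℕ → ℕ → ℕ → ℕ → ℝ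
  b : ℕ → ℕ → ℝ

namespace NN

/-- The vector of neuron values at layer `l`; layer `0` is the (truncated) input, and
for `l ≥ 1` the activation `ρ` is applied componentwise. -/
def hidden (Φ : NN) (ρ : ℝ → ℝ) (x : ℕ → ℝ) : ℕ → ℕ → ℝ
  | 0 => fun i => if i < Φ.d then x i else 0
  | l + 1 => fun i =>
      ρ ((∑ k : Fin (l + 1), ∑ j ∈ Finset.range (Φ.arity k),
        Φ.A (l + 1) k i j * Φ.hidden ρ x k j) + Φ.b (l + 1) i)
  termination_by l => l
  decreasing_by exact k.isLt

/-- The realization `R_ρ(Φ)` of the network `Φ` with activation function `ρ`: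
no activation is applied in the last layer `L`. -/
def realize (Φ : NN) (ρ : ℝ → ℝ) (x : ℕ → ℝ) : ℕ → ℝ := fun i =>
  (∑ k : Fin Φ.L, ∑ j ∈ Finset.range (Φ.arity k),
    Φ.A Φ.L k i j * Φ.hidden ρ x k j) + Φ.b Φ.L i

/-- The output dimension `N_L` of a network. -/
def outDim (Φ : NN) : ℕ := Φ.arity Φ.L

/-- The number of neurons `N(Φ) = d + N_1 + … + N_L`. -/
def numNeurons (Φ : NN) : ℕ := ∑ l ∈ Finset.range (Φ.L + 1), Φ.arity l

/-- The number of nonzero weights `M(Φ)`. -/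
def numWeights (Φ : NN) : ℕ :=
  ∑ l ∈ Finset.Icc 1 Φ.L,
    ((∑ k ∈ Finset.range l,
        {p : ℕ × ℕ | p.1 < Φ.arity l ∧ p.2 < Φ.arity k ∧ Φ.A l k p.1 p.2 ≠ 0}.ncard) +
      {i : ℕ | i < Φ.arity l ∧ Φ.b l i ≠ 0}.ncard)

/-- A standard neural network: only neurons in neighboring layers are connected. -/
def IsStandard (Φ : NN) : Prop :=
  ∀ l k, l ≤ Φ.L → k + 2 ≤ l → ∀ i j, i < Φ.arity l → j < Φ.arity k → Φ.A l k i j = 0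

/-- A neural network architecture: a network all of whose entries are `0` or `1`. -/
def IsArchitecture (𝒜 : NN) : Prop :=
  (∀ l k i j, 𝒜.A l k i j = 0 ∨ 𝒜.A l k i j = 1) ∧ ∀ l i, 𝒜.b l i = 0 ∨ 𝒜.b l i = 1

/-- `Φ` has architecture `𝒜`: same layer dimensions, and nonzero entries of `Φ` occur
only at positions where `𝒜` is nonzero. -/
def HasArchitecture (Φ 𝒜 : NN) : Prop :=
  Φ.d = 𝒜.d ∧ Φ.L = 𝒜.L ∧ (∀ l, Φ.arity l = 𝒜.arity l) ∧
    (∀ l k i j, Φ.A l k i j ≠ 0 → 𝒜.A l k i j ≠ 0) ∧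
    (∀ l i, Φ.b l i ≠ 0 → 𝒜.b l i ≠ 0)

end NN

/-- Embedding of `ℝ^d` into the input signals `ℕ → ℝ` of a network. -/
def embed (d : ℕ) (x : Fin d → ℝ) : ℕ → ℝ := fun i => if h : i < d then x ⟨i, h⟩ else 0

/-- The unit cube `[0,1]^d`. -/
def cube (d : ℕ) : Set (Fin d → ℝ) := {x | ∀ i, x i ∈ Set.Icc (0 : ℝ) 1}

/-- The piecewise linear bump function `ψ`. -/
def bump (x : ℝ) : ℝ := if |x| < 1 then 1 else if |x| ≤ 2 then 2 - |x| else 0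

/-- The partition-of-unity function `φ_m(x) = ∏_l ψ(3N(x_l − m_l/N))`. -/
def pou (d N : ℕ) (m : Fin d → ℕ) (x : Fin d → ℝ) : ℝ :=
  ∏ l, bump (3 * N * (x l - m l / N))

/-- The polynomial `x ↦ ∑_{|α| ≤ n−1} c_α x^α` with coefficients `c`. -/
def poly (d n : ℕ) (c : (Fin d → Fin n) → ℝ) (x : Fin d → ℝ) : ℝ :=
  ∑ α ∈ Finset.univ.filter (fun α : Fin d → Fin n => (∑ l, (α l : ℕ)) ≤ n - 1),
    c α * ∏ l, x l ^ (α l : ℕ)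

/-- The partial derivative in the `i`-th coordinate direction. -/
def pderivAt {d : ℕ} (i : Fin d) (f : (Fin d → ℝ) → ℝ) : (Fin d → ℝ) → ℝ :=
  fun x => fderiv ℝ f x (Pi.single i 1)

/-- Iterated partial derivative `D^α f` along a list of coordinate directions. -/
def pdList {d : ℕ} : List (Fin d) → ((Fin d → ℝ) → ℝ) → ((Fin d → ℝ) → ℝ)
  | [], f => f
  | i :: t, f => pdList t (pderivAt i f)

/-- `f` lies in the `W^{n,∞}`-ball of radius `B` on `[0,1]^d`: it is `(n−1)`-times
continuously differentiable on an open set containing the cube, all partial derivatives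
of order `≤ n−1` are bounded by `B` on the cube, and those of order `n−1` are
`B`-Lipschitz on the cube with respect to the Euclidean norm. -/
def InWBall (d n : ℕ) (B : ℝ) (f : (Fin d → ℝ) → ℝ) : Prop :=
  (∃ U : Set (Fin d → ℝ), IsOpen U ∧ cube d ⊆ U ∧ ContDiffOn ℝ (n - 1 : ℕ) f U) ∧
    (∀ l : List (Fin d), l.length ≤ n - 1 → ∀ x ∈ cube d, |pdList l f x| ≤ B) ∧
    (∀ l : List (Fin d), l.length = n - 1 → ∀ x ∈ cube d, ∀ y ∈ cube d,
      |pdList l f x - pdList l f y| ≤ B * Real.sqrt (∑ i, (x i - y i) ^ 2))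

/-!
The network `Φ₁ ⊙ Φ₂` runs `Φ₂`, but replaces its affine output `y` by the layer of
`2 N_{L₂}` neurons `(ρ(y), ρ(-y))`. Since `ρ(t) - ρ(-t) = t`, the first affine map of `Φ₁`,
fed from this layer through the weights `[A | -A]`, still computes `A y`; the remaining layers
of `Φ₁` are copied, with no connections from the layers of `Φ₂`. Only one layer and one block
of weights are doubled, whence the factor `2` in the counts.
-/

lemma relu_sub_relu_neg (t : ℝ) : relu t - relu (-t) = t := by
  simp only [relu]
  rcases le_total 0 t with h | h
  · rw [max_eq_right h, max_eq_left (neg_nonpos.mpr h), sub_zero]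
  · rw [max_eq_left h, max_eq_right (neg_nonneg.mpr h), zero_sub, neg_neg]

lemma sum_range_add_of_eq_zero {M : Type*} [AddCommMonoid M] {f : ℕ → M} {a : ℕ}
    (hf : ∀ k < a, f k = 0) (n : ℕ) :
    ∑ k ∈ range (a + n), f k = ∑ k ∈ range n, f (a + k) := by
  rw [sum_range_add, sum_eq_zero fun k hk => hf k (mem_range.mp hk), zero_add]

lemma Set.ncard_le_two_mul_of_subset_union_image {α : Type*} {S T : Set α} {e : α → α}
    (hT : T.Finite) (h : S ⊆ T ∪ e '' T) : S.ncard ≤ 2 * T.ncard :=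
  calc S.ncard ≤ (T ∪ e '' T).ncard := Set.ncard_le_ncard h (hT.union (hT.image e))
    _ ≤ T.ncard + (e '' T).ncard := Set.ncard_union_le _ _
    _ ≤ 2 * T.ncard := by have := Set.ncard_image_le (f := e) hT; omega

lemma finite_lt_prod_lt (a b : ℕ) (Q : ℕ × ℕ → Prop) :
    {p : ℕ × ℕ | p.1 < a ∧ p.2 < b ∧ Q p}.Finite :=
  ((Set.finite_lt_nat a).prod (Set.finite_lt_nat b)).subset fun _ hp => ⟨hp.1, hp.2.1⟩

def stackNeg (n : ℕ) (f : ℕ → ℝ) (i : ℕ) : ℝ := if i < n then f i else -f (i - n)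

lemma stackNeg_ne_zero {n : ℕ} {f : ℕ → ℝ} {i : ℕ} (hi : i < 2 * n) (hf : stackNeg n f i ≠ 0) :
    (i < n ∧ f i ≠ 0) ∨ ∃ i', (i' < n ∧ f i' ≠ 0) ∧ i' + n = i := by
  unfold stackNeg at hf
  split_ifs at hf with hin
  · exact Or.inl ⟨hin, hf⟩
  · exact Or.inr ⟨i - n, ⟨by omega, neg_ne_zero.mp hf⟩, by omega⟩

lemma ncard_stackNeg_ne_zero_le (n : ℕ) (f : ℕ → ℝ) :
    {i | i < 2 * n ∧ stackNeg n f i ≠ 0}.ncard ≤ 2 * {i | i < n ∧ f i ≠ 0}.ncard := by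
  refine Set.ncard_le_two_mul_of_subset_union_image (e := (· + n))
    ((Set.finite_lt_nat n).subset fun _ hi => hi.1) ?_
  rintro i ⟨hi, hne⟩
  rcases stackNeg_ne_zero hi hne with hi' | ⟨i', hi', rfl⟩
  exacts [Or.inl hi', Or.inr ⟨i', hi', rfl⟩]

lemma ncard_stackNeg_rows_ne_zero_le (n a : ℕ) (g : ℕ → ℕ → ℝ) :
    {p : ℕ × ℕ | p.1 < 2 * n ∧ p.2 < a ∧ stackNeg n (g · p.2) p.1 ≠ 0}.ncard ≤
      2 * {p : ℕ × ℕ | p.1 < n ∧ p.2 < a ∧ g p.1 p.2 ≠ 0}.ncard := by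
  refine Set.ncard_le_two_mul_of_subset_union_image (e := fun p => (p.1 + n, p.2))
    (finite_lt_prod_lt _ _ _) ?_
  rintro ⟨i, j⟩ ⟨hi, hj, hne⟩
  rcases stackNeg_ne_zero hi hne with ⟨hi', hne'⟩ | ⟨i', ⟨hi', hne'⟩, rfl⟩
  exacts [Or.inl ⟨hi', hj, hne'⟩, Or.inr ⟨(i', j), ⟨hi', hj, hne'⟩, rfl⟩]

lemma ncard_stackNeg_cols_ne_zero_le (n a : ℕ) (g : ℕ → ℕ → ℝ) :
    {p : ℕ × ℕ | p.1 < a ∧ p.2 < 2 * n ∧ stackNeg n (g p.1) p.2 ≠ 0}.ncard ≤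
      2 * {p : ℕ × ℕ | p.1 < a ∧ p.2 < n ∧ g p.1 p.2 ≠ 0}.ncard := by
  refine Set.ncard_le_two_mul_of_subset_union_image (e := fun p => (p.1, p.2 + n))
    (finite_lt_prod_lt _ _ _) ?_
  rintro ⟨i, j⟩ ⟨hi, hj, hne⟩
  rcases stackNeg_ne_zero hj hne with ⟨hj', hne'⟩ | ⟨j', ⟨hj', hne'⟩, rfl⟩
  exacts [Or.inl ⟨hi, hj', hne'⟩, Or.inr ⟨(i, j'), ⟨hi, hj', hne'⟩, rfl⟩]

lemma sum_stackNeg_mul_stackNeg {n : ℕ} {ρ : ℝ → ℝ} (hρ : ∀ t, ρ t - ρ (-t) = t) (a y : ℕ → ℝ) :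
    ∑ j ∈ range (2 * n), stackNeg n a j * ρ (stackNeg n y j) = ∑ j ∈ range n, a j * y j := by
  rw [two_mul, sum_range_add, ← sum_add_distrib]
  refine sum_congr rfl fun j hj => ?_
  have hj : j < n := mem_range.mp hj
  simp only [stackNeg, hj, if_true, show ¬ n + j < n by omega, if_false, Nat.add_sub_cancel_left]
  linear_combination a j * hρ (y j)

namespace NN

variable (Φ : NN) (ρ : ℝ → ℝ) (x : ℕ → ℝ)

def preact (l i : ℕ) : ℝ :=
  (∑ k ∈ range l, ∑ j ∈ range (Φ.arity k), Φ.A l k i j * Φ.hidden ρ x k j) + Φ.b l i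

lemma hidden_zero (i : ℕ) : Φ.hidden ρ x 0 i = if i < Φ.d then x i else 0 := by
  rw [hidden]

lemma hidden_succ (l i : ℕ) : Φ.hidden ρ x (l + 1) i = ρ (Φ.preact ρ x (l + 1) i) := by
  rw [hidden, preact]
  beta_reduce
  rw [Fin.sum_univ_eq_sum_range
    (fun k => ∑ j ∈ range (Φ.arity k), Φ.A (l + 1) k i j * Φ.hidden ρ x k j)]

lemma realize_eq_preact (i : ℕ) : Φ.realize ρ x i = Φ.preact ρ x Φ.L i := by
  rw [realize, preact, Fin.sum_univ_eq_sum_range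
    (fun k => ∑ j ∈ range (Φ.arity k), Φ.A Φ.L k i j * Φ.hidden ρ x k j)]

def edgeCount (l k : ℕ) : ℕ :=
  {p : ℕ × ℕ | p.1 < Φ.arity l ∧ p.2 < Φ.arity k ∧ Φ.A l k p.1 p.2 ≠ 0}.ncard

def biasCount (l : ℕ) : ℕ := {i : ℕ | i < Φ.arity l ∧ Φ.b l i ≠ 0}.ncard

def layerWeights (l : ℕ) : ℕ := (∑ k ∈ range l, Φ.edgeCount l k) + Φ.biasCount l

lemma numWeights_eq_sum_layerWeights :
    Φ.numWeights = ∑ l ∈ range Φ.L, Φ.layerWeights (l + 1) := by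
  rw [numWeights, ← Finset.Ico_add_one_right_eq_Icc, sum_Ico_eq_sum_range, Nat.add_sub_cancel]
  simp only [add_comm 1]
  rfl

def sparseConcat (Φ₁ Φ₂ : NN) : NN where
  d := Φ₂.d
  L := Φ₁.L + Φ₂.L
  hL := Nat.add_pos_right _ Φ₂.hL
  arity l :=
    if l < Φ₂.L then Φ₂.arity l
    else if l = Φ₂.L then 2 * Φ₂.outDim
    else Φ₁.arity (l - Φ₂.L)
  harity := by simp [Φ₂.hL, Φ₂.harity]
  A l k i j :=
    if l < Φ₂.L then Φ₂.A l k i j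
    else if l = Φ₂.L then stackNeg Φ₂.outDim (Φ₂.A Φ₂.L k · j) i
    else if k < Φ₂.L then 0
    else if k = Φ₂.L then stackNeg Φ₂.outDim (Φ₁.A (l - Φ₂.L) 0 i) j
    else Φ₁.A (l - Φ₂.L) (k - Φ₂.L) i j
  b l i :=
    if l < Φ₂.L then Φ₂.b l i
    else if l = Φ₂.L then stackNeg Φ₂.outDim (Φ₂.b Φ₂.L) i
    else Φ₁.b (l - Φ₂.L) i

section sparseConcat

variable (Φ₁ Φ₂ : NN) {l k : ℕ} (m : ℕ)

lemma sparseConcat_arity_of_lt (hl : l < Φ₂.L) :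
    (Φ₁.sparseConcat Φ₂).arity l = Φ₂.arity l := by
  simp [sparseConcat, hl]

lemma sparseConcat_arity_self : (Φ₁.sparseConcat Φ₂).arity Φ₂.L = 2 * Φ₂.outDim := by
  simp [sparseConcat]

lemma sparseConcat_arity_add_succ :
    (Φ₁.sparseConcat Φ₂).arity (Φ₂.L + (m + 1)) = Φ₁.arity (m + 1) := by
  simp [sparseConcat]

lemma outDim_sparseConcat : (Φ₁.sparseConcat Φ₂).outDim = Φ₁.outDim := by
  obtain ⟨m, hm⟩ := Nat.exists_eq_add_one_of_ne_zero Φ₁.hL.ne'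
  have hL : (Φ₁.sparseConcat Φ₂).L = Φ₂.L + (m + 1) := by
    change Φ₁.L + Φ₂.L = _
    omega
  rw [outDim, outDim, hL, sparseConcat_arity_add_succ, hm]

lemma sparseConcat_A_of_lt (hl : l < Φ₂.L) (k i j : ℕ) :
    (Φ₁.sparseConcat Φ₂).A l k i j = Φ₂.A l k i j := by
  simp [sparseConcat, hl]

lemma sparseConcat_A_self (k i j : ℕ) :
    (Φ₁.sparseConcat Φ₂).A Φ₂.L k i j = stackNeg Φ₂.outDim (Φ₂.A Φ₂.L k · j) i := by
  simp [sparseConcat]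

lemma sparseConcat_A_add_succ_of_lt (hk : k < Φ₂.L) (i j : ℕ) :
    (Φ₁.sparseConcat Φ₂).A (Φ₂.L + (m + 1)) k i j = 0 := by
  simp [sparseConcat, hk]

lemma sparseConcat_A_add_succ_self (i j : ℕ) :
    (Φ₁.sparseConcat Φ₂).A (Φ₂.L + (m + 1)) Φ₂.L i j =
      stackNeg Φ₂.outDim (Φ₁.A (m + 1) 0 i) j := by
  simp [sparseConcat]

lemma sparseConcat_A_add_succ_add_succ (k i j : ℕ) :
    (Φ₁.sparseConcat Φ₂).A (Φ₂.L + (m + 1)) (Φ₂.L + (k + 1)) i j = Φ₁.A (m + 1) (k + 1) i j := by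
  simp [sparseConcat]

lemma sparseConcat_b_of_lt (hl : l < Φ₂.L) (i : ℕ) :
    (Φ₁.sparseConcat Φ₂).b l i = Φ₂.b l i := by
  simp [sparseConcat, hl]

lemma sparseConcat_b_self (i : ℕ) :
    (Φ₁.sparseConcat Φ₂).b Φ₂.L i = stackNeg Φ₂.outDim (Φ₂.b Φ₂.L) i := by
  simp [sparseConcat]

lemma sparseConcat_b_add_succ (i : ℕ) :
    (Φ₁.sparseConcat Φ₂).b (Φ₂.L + (m + 1)) i = Φ₁.b (m + 1) i := by
  simp [sparseConcat]

variable {ρ : ℝ → ℝ} (x : ℕ → ℝ)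

lemma hidden_sparseConcat_of_lt (hl : l < Φ₂.L) :
    (Φ₁.sparseConcat Φ₂).hidden ρ x l = Φ₂.hidden ρ x l := by
  induction l using Nat.strong_induction_on with
  | _ l ih =>
    funext i
    rcases l with _ | l
    · rw [hidden_zero, hidden_zero]
      rfl
    · rw [hidden_succ, hidden_succ, preact, preact, sparseConcat_b_of_lt Φ₁ Φ₂ hl]
      congr 2
      refine sum_congr rfl fun k hk => ?_
      have hk' : k < l + 1 := mem_range.mp hk
      simp only [sparseConcat_arity_of_lt Φ₁ Φ₂ (hk'.trans hl), sparseConcat_A_of_lt Φ₁ Φ₂ hl,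
        ih k hk' (hk'.trans hl)]

lemma preact_sparseConcat_self (i : ℕ) :
    (Φ₁.sparseConcat Φ₂).preact ρ x Φ₂.L i = stackNeg Φ₂.outDim (Φ₂.preact ρ x Φ₂.L) i := by
  have hlower : ∀ k ∈ range Φ₂.L,
      ∑ j ∈ range ((Φ₁.sparseConcat Φ₂).arity k),
        (Φ₁.sparseConcat Φ₂).A Φ₂.L k i j * (Φ₁.sparseConcat Φ₂).hidden ρ x k j =
      ∑ j ∈ range (Φ₂.arity k), stackNeg Φ₂.outDim (Φ₂.A Φ₂.L k · j) i * Φ₂.hidden ρ x k j := by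
    intro k hk
    simp only [sparseConcat_arity_of_lt Φ₁ Φ₂ (mem_range.mp hk), sparseConcat_A_self,
      hidden_sparseConcat_of_lt Φ₁ Φ₂ x (mem_range.mp hk)]
  rw [preact, sum_congr rfl hlower, sparseConcat_b_self]
  unfold stackNeg preact
  split_ifs
  · rfl
  · simp only [neg_mul, sum_neg_distrib, neg_add]

lemma hidden_sparseConcat_self (i : ℕ) :
    (Φ₁.sparseConcat Φ₂).hidden ρ x Φ₂.L i = ρ (stackNeg Φ₂.outDim (Φ₂.realize ρ x) i) := by
  have hL := hidden_succ (Φ₁.sparseConcat Φ₂) ρ x (Φ₂.L - 1) i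
  rw [Nat.sub_add_cancel Φ₂.hL] at hL
  rw [hL, preact_sparseConcat_self, funext (realize_eq_preact Φ₂ ρ x)]

variable {Φ₁ Φ₂}

lemma preact_sparseConcat_add_succ (hρ : ∀ t, ρ t - ρ (-t) = t) (h : Φ₁.d = Φ₂.outDim)
    (hprev : ∀ k < m, (Φ₁.sparseConcat Φ₂).hidden ρ x (Φ₂.L + (k + 1)) =
      Φ₁.hidden ρ (Φ₂.realize ρ x) (k + 1)) (i : ℕ) :
    (Φ₁.sparseConcat Φ₂).preact ρ x (Φ₂.L + (m + 1)) i =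
      Φ₁.preact ρ (Φ₂.realize ρ x) (m + 1) i := by
  have hlower : ∀ k < Φ₂.L, ∑ j ∈ range ((Φ₁.sparseConcat Φ₂).arity k),
      (Φ₁.sparseConcat Φ₂).A (Φ₂.L + (m + 1)) k i j * (Φ₁.sparseConcat Φ₂).hidden ρ x k j = 0 :=
    fun k hk => sum_eq_zero fun j _ => by
      rw [sparseConcat_A_add_succ_of_lt Φ₁ Φ₂ m hk, zero_mul]
  rw [preact, preact, sum_range_add_of_eq_zero hlower, sparseConcat_b_add_succ]
  congr 1
  refine sum_congr rfl fun k hk => ?_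
  rcases k with _ | k
  · rw [add_zero, sparseConcat_arity_self, Φ₁.harity, h]
    simp only [sparseConcat_A_add_succ_self, hidden_sparseConcat_self]
    rw [sum_stackNeg_mul_stackNeg hρ]
    refine sum_congr rfl fun j hj => ?_
    rw [hidden_zero, if_pos (h ▸ mem_range.mp hj)]
  · simp only [sparseConcat_arity_add_succ, sparseConcat_A_add_succ_add_succ,
      hprev k (Nat.succ_lt_succ_iff.mp (mem_range.mp hk))]

lemma hidden_sparseConcat_add_succ (hρ : ∀ t, ρ t - ρ (-t) = t) (h : Φ₁.d = Φ₂.outDim) :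
    (Φ₁.sparseConcat Φ₂).hidden ρ x (Φ₂.L + (m + 1)) = Φ₁.hidden ρ (Φ₂.realize ρ x) (m + 1) := by
  induction m using Nat.strong_induction_on with
  | _ m ih =>
    funext i
    rw [← add_assoc, hidden_succ, hidden_succ, add_assoc,
      preact_sparseConcat_add_succ m x hρ h ih]

lemma realize_sparseConcat (hρ : ∀ t, ρ t - ρ (-t) = t) (h : Φ₁.d = Φ₂.outDim) (i : ℕ) :
    (Φ₁.sparseConcat Φ₂).realize ρ x i = Φ₁.realize ρ (Φ₂.realize ρ x) i := by
  obtain ⟨m, hm⟩ := Nat.exists_eq_add_one_of_ne_zero Φ₁.hL.ne'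
  have hL : (Φ₁.sparseConcat Φ₂).L = Φ₂.L + (m + 1) := by
    change Φ₁.L + Φ₂.L = _
    omega
  rw [realize_eq_preact, realize_eq_preact, hL, hm,
    preact_sparseConcat_add_succ m x hρ h fun k _ => hidden_sparseConcat_add_succ k x hρ h]

variable (Φ₁ Φ₂)

lemma edgeCount_sparseConcat_le_of_le (hl : l ≤ Φ₂.L) (hk : k < l) :
    (Φ₁.sparseConcat Φ₂).edgeCount l k ≤ 2 * Φ₂.edgeCount l k := by
  have hk₂ : k < Φ₂.L := hk.trans_le hl
  unfold edgeCount
  rcases hl.lt_or_eq with hl | rfl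
  · simp only [sparseConcat_arity_of_lt Φ₁ Φ₂ hl, sparseConcat_arity_of_lt Φ₁ Φ₂ hk₂,
      sparseConcat_A_of_lt Φ₁ Φ₂ hl]
    omega
  · simp only [sparseConcat_arity_self, sparseConcat_arity_of_lt Φ₁ Φ₂ hk₂, sparseConcat_A_self]
    exact ncard_stackNeg_rows_ne_zero_le _ _ _

lemma biasCount_sparseConcat_le_of_le (hl : l ≤ Φ₂.L) :
    (Φ₁.sparseConcat Φ₂).biasCount l ≤ 2 * Φ₂.biasCount l := by
  unfold biasCount
  rcases hl.lt_or_eq with hl | rfl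
  · simp only [sparseConcat_arity_of_lt Φ₁ Φ₂ hl, sparseConcat_b_of_lt Φ₁ Φ₂ hl]
    omega
  · simp only [sparseConcat_arity_self, sparseConcat_b_self]
    exact ncard_stackNeg_ne_zero_le _ _

lemma layerWeights_sparseConcat_le_of_le (hl : l ≤ Φ₂.L) :
    (Φ₁.sparseConcat Φ₂).layerWeights l ≤ 2 * Φ₂.layerWeights l := by
  rw [layerWeights, layerWeights, mul_add, mul_sum]
  exact add_le_add (sum_le_sum fun k hk => edgeCount_sparseConcat_le_of_le Φ₁ Φ₂ hl
    (mem_range.mp hk)) (biasCount_sparseConcat_le_of_le Φ₁ Φ₂ hl)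

lemma edgeCount_sparseConcat_add_succ_of_lt (hk : k < Φ₂.L) :
    (Φ₁.sparseConcat Φ₂).edgeCount (Φ₂.L + (m + 1)) k = 0 := by
  simp [edgeCount, sparseConcat_A_add_succ_of_lt Φ₁ Φ₂ m hk]

variable {Φ₁ Φ₂}

lemma edgeCount_sparseConcat_add_succ_add_le (h : Φ₁.d = Φ₂.outDim) (k : ℕ) :
    (Φ₁.sparseConcat Φ₂).edgeCount (Φ₂.L + (m + 1)) (Φ₂.L + k) ≤
      2 * Φ₁.edgeCount (m + 1) k := by
  unfold edgeCount
  rcases k with _ | k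
  · simp only [add_zero, sparseConcat_arity_add_succ, sparseConcat_arity_self,
      sparseConcat_A_add_succ_self, Φ₁.harity, h]
    exact ncard_stackNeg_cols_ne_zero_le _ _ _
  · simp only [sparseConcat_arity_add_succ, sparseConcat_A_add_succ_add_succ]
    omega

lemma layerWeights_sparseConcat_add_succ_le (h : Φ₁.d = Φ₂.outDim) :
    (Φ₁.sparseConcat Φ₂).layerWeights (Φ₂.L + (m + 1)) ≤ 2 * Φ₁.layerWeights (m + 1) := by
  have hbias : (Φ₁.sparseConcat Φ₂).biasCount (Φ₂.L + (m + 1)) = Φ₁.biasCount (m + 1) := by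
    simp only [biasCount, sparseConcat_arity_add_succ, sparseConcat_b_add_succ]
  rw [layerWeights, layerWeights, sum_range_add_of_eq_zero
    (fun k hk => edgeCount_sparseConcat_add_succ_of_lt Φ₁ Φ₂ m hk), hbias, mul_add, mul_sum]
  exact add_le_add (sum_le_sum fun k _ => edgeCount_sparseConcat_add_succ_add_le m h k)
    (by omega)

lemma numWeights_sparseConcat_le (h : Φ₁.d = Φ₂.outDim) :
    (Φ₁.sparseConcat Φ₂).numWeights ≤ 2 * Φ₁.numWeights + 2 * Φ₂.numWeights := by
  have hL : (Φ₁.sparseConcat Φ₂).L = Φ₂.L + Φ₁.L := add_comm _ _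
  rw [add_comm (2 * Φ₁.numWeights), numWeights_eq_sum_layerWeights,
    numWeights_eq_sum_layerWeights, numWeights_eq_sum_layerWeights, hL, sum_range_add, mul_sum,
    mul_sum]
  exact add_le_add
    (sum_le_sum fun l hl => layerWeights_sparseConcat_le_of_le Φ₁ Φ₂ (mem_range.mp hl))
    (sum_le_sum fun l _ => by rw [add_assoc]; exact layerWeights_sparseConcat_add_succ_le l h)

lemma numNeurons_sparseConcat (h : Φ₁.d = Φ₂.outDim) :
    (Φ₁.sparseConcat Φ₂).numNeurons = Φ₁.numNeurons + Φ₂.numNeurons := by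
  have h₁ : Φ₁.numNeurons = ∑ l ∈ range Φ₁.L, Φ₁.arity (l + 1) + Φ₂.outDim := by
    rw [numNeurons, sum_range_succ', Φ₁.harity, h]
  have h₂ : Φ₂.numNeurons = ∑ l ∈ range Φ₂.L, Φ₂.arity l + Φ₂.outDim := by
    rw [numNeurons, sum_range_succ]
    rfl
  have hL : (Φ₁.sparseConcat Φ₂).L + 1 = Φ₂.L + (Φ₁.L + 1) := by
    change Φ₁.L + Φ₂.L + 1 = _
    omega
  have hlower : ∑ l ∈ range Φ₂.L, (Φ₁.sparseConcat Φ₂).arity l =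
      ∑ l ∈ range Φ₂.L, Φ₂.arity l :=
    sum_congr rfl fun l hl => sparseConcat_arity_of_lt Φ₁ Φ₂ (mem_range.mp hl)
  rw [numNeurons, hL, sum_range_add, sum_range_succ', add_zero, sparseConcat_arity_self, hlower]
  simp only [sparseConcat_arity_add_succ]
  omega

end sparseConcat

end NN

/-- **Sparse concatenation.**
For ReLU networks `Φ₁, Φ₂` with matching dimensions there is a network `Ψ = Φ₁ ⊙ Φ₂`
realizing the composition, with `L(Ψ) = L₁ + L₂`, `M(Ψ) ≤ 2M(Φ₁) + 2M(Φ₂)` and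
`N(Ψ) ≤ 2N(Φ₁) + 2N(Φ₂)`. -/
theorem sparse_concatenation (Φ₁ Φ₂ : NN) (h : Φ₁.d = Φ₂.outDim) :
    ∃ Ψ : NN, Ψ.d = Φ₂.d ∧ Ψ.outDim = Φ₁.outDim ∧
      Ψ.L = Φ₁.L + Φ₂.L ∧
      Ψ.numWeights ≤ 2 * Φ₁.numWeights + 2 * Φ₂.numWeights ∧
      Ψ.numNeurons ≤ 2 * Φ₁.numNeurons + 2 * Φ₂.numNeurons ∧
      ∀ x : ℕ → ℝ, ∀ i < Φ₁.outDim,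
        Ψ.realize relu x i = Φ₁.realize relu (Φ₂.realize relu x) i := by
  refine ⟨Φ₁.sparseConcat Φ₂, rfl, Φ₁.outDim_sparseConcat Φ₂, rfl,
    NN.numWeights_sparseConcat_le h, ?_,
    fun x i _ => NN.realize_sparseConcat x relu_sub_relu_neg h i⟩
  rw [NN.numNeurons_sparseConcat h]
  omega

end
end

section
/- For every M ≥ 1 there exist constants c, c₁ > 0 and c₂ = c₂(M) > 0 such that for every ε ∈ (0, 1/2) there is a neural network ×̃_ε with two-dimensional input and one-dimensional output whose ReLU realization h := R_ρ(×̃_ε) satisfies: (1) sup_{(x,y)∈[−M,M]²} |h(x,y) − x·y| ≤ ε and the function (x,y) ↦ h(x,y) − x·y is ε-Lipschitz on [−M,M]² with respect to the ℓ¹-norm on ℝ²; (2) h(x,0) = 0 and h(0,y) = 0 for all x, y ∈ [−M,M]; (3) h is c·M-Lipschitz on [−M,M]² with respect to the ℓ¹-norm; and (4) the number of layers, neurons and nonzero weights of ×̃_ε are each at most c₁·log₂(1/ε) + c₂. -/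
noncomputable section

open Finset

/-!
Yarotsky's construction.  The hat function `g t = 2 min(t, 1 - t)` satisfies
`t² = t - g t / 2 + (g t)² / 4`, so `f_m t = t - ∑_{s=1}^m g^[s] t / 4^s` satisfies
`f_{m+1} t - t² = (f_m (g t) - (g t)²) / 4`.  As `g` maps `[0,1]` to itself and is `2`-Lipschitz,
the error `f_m t - t²` on `[0,1]` is at most `4^{-(m+1)}` and is `2^{-m}`-Lipschitz.  The
polarization `xy = 2M²((|x+y|/2M)² - (|x|/2M)² - (|y|/2M)²)` turns `f_m` into an approximate
product, which vanishes on the axes because `f_m 0 = 0`.  A ReLU network with `m + 3` layers of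
width at most `6` computes it, since `g u = 2u - 4 relu(u - 1/2)`; taking
`2^{-m} ≤ ε / (2M²)` gives all the claims.
-/

namespace NN

variable (Φ : NN) (ρ : ℝ → ℝ) (x : ℕ → ℝ)

lemma hidden_succ_s8 (l i : ℕ) :
    Φ.hidden ρ x (l + 1) i = ρ ((∑ k ∈ range (l + 1), ∑ j ∈ range (Φ.arity k),
      Φ.A (l + 1) k i j * Φ.hidden ρ x k j) + Φ.b (l + 1) i) := by
  rw [hidden]
  exact congrArg (fun s => ρ (s + Φ.b (l + 1) i)) (Fin.sum_univ_eq_sum_range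
    (fun k => ∑ j ∈ range (Φ.arity k), Φ.A (l + 1) k i j * Φ.hidden ρ x k j) (l + 1))

lemma hidden_succ_of_prev {l i : ℕ} (h : ∀ k < l, ∀ j, Φ.A (l + 1) k i j = 0) :
    Φ.hidden ρ x (l + 1) i = ρ ((∑ j ∈ range (Φ.arity l),
      Φ.A (l + 1) l i j * Φ.hidden ρ x l j) + Φ.b (l + 1) i) := by
  rw [hidden_succ_s8, sum_range_succ, sum_eq_zero, zero_add]
  intro k hk
  exact sum_eq_zero fun j _ => by rw [h k (mem_range.1 hk) j, zero_mul]

lemma realize_eq_sum (i : ℕ) :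
    Φ.realize ρ x i = (∑ k ∈ range Φ.L, ∑ j ∈ range (Φ.arity k),
      Φ.A Φ.L k i j * Φ.hidden ρ x k j) + Φ.b Φ.L i := by
  rw [realize, Fin.sum_univ_eq_sum_range
    (fun k => ∑ j ∈ range (Φ.arity k), Φ.A Φ.L k i j * Φ.hidden ρ x k j)]

lemma numNeurons_le {w : ℕ} (h : ∀ l, Φ.arity l ≤ w) : Φ.numNeurons ≤ (Φ.L + 1) * w := by
  simpa [numNeurons] using sum_le_card_nsmul (range (Φ.L + 1)) Φ.arity w fun l _ => h l

lemma ncard_weights_le (l k : ℕ) :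
    {p : ℕ × ℕ | p.1 < Φ.arity l ∧ p.2 < Φ.arity k ∧ Φ.A l k p.1 p.2 ≠ 0}.ncard
      ≤ Φ.arity l * Φ.arity k :=
  calc _ ≤ (↑(range (Φ.arity l) ×ˢ range (Φ.arity k)) : Set (ℕ × ℕ)).ncard :=
        Set.ncard_le_ncard (fun p hp => by simp [hp.1, hp.2.1]) (Finset.finite_toSet _)
    _ = Φ.arity l * Φ.arity k := by simp

lemma ncard_weights_eq_zero {l k : ℕ} (h : ∀ i j, Φ.A l k i j = 0) :
    {p : ℕ × ℕ | p.1 < Φ.arity l ∧ p.2 < Φ.arity k ∧ Φ.A l k p.1 p.2 ≠ 0}.ncard = 0 := by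
  simp [h]

lemma ncard_biases_le (l : ℕ) : {i : ℕ | i < Φ.arity l ∧ Φ.b l i ≠ 0}.ncard ≤ Φ.arity l :=
  calc _ ≤ (↑(range (Φ.arity l)) : Set ℕ).ncard :=
        Set.ncard_le_ncard (fun i hi => by simp [hi.1]) (Finset.finite_toSet _)
    _ = Φ.arity l := by simp

end NN

namespace MulNet

def hat (t : ℝ) : ℝ := 2 * min t (1 - t)

lemma hat_zero : hat 0 = 0 := by simp [hat]

lemma two_mul_sub_four_mul_relu (u : ℝ) : 2 * u - 4 * relu (u - 1 / 2) = hat u := by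
  rcases le_total u (1 / 2) with h | h
  · rw [relu, max_eq_left (by linarith), hat, min_eq_left (by linarith)]; ring
  · rw [relu, max_eq_right (by linarith), hat, min_eq_right (by linarith)]; ring

lemma sq_eq_sub_hat_add_sq_hat (t : ℝ) : t ^ 2 = t - hat t / 2 + hat t ^ 2 / 4 := by
  rcases min_cases t (1 - t) with ⟨h, -⟩ | ⟨h, -⟩ <;> rw [hat, h] <;> ring

lemma mapsTo_hat : Set.MapsTo hat (Set.Icc 0 1) (Set.Icc 0 1) := by
  rintro t ⟨h0, h1⟩
  rcases min_cases t (1 - t) with ⟨h, h'⟩ | ⟨h, h'⟩ <;> rw [hat, h] <;>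
    constructor <;> linarith

lemma abs_hat_sub_hat_le (a b : ℝ) : |hat a - hat b| ≤ 2 * |a - b| := by
  have h := abs_min_sub_min_le_max a (1 - a) b (1 - b)
  rw [show 1 - a - (1 - b) = -(a - b) by ring, abs_neg, max_self] at h
  rw [hat, hat, ← mul_sub, abs_mul, abs_two]
  gcongr

def sqApprox (m : ℕ) (t : ℝ) : ℝ := t - ∑ s ∈ range m, hat^[s + 1] t / 4 ^ (s + 1)

lemma sqApprox_zero_left (t : ℝ) : sqApprox 0 t = t := by simp [sqApprox]

lemma sqApprox_zero_right (m : ℕ) : sqApprox m 0 = 0 := by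
  simp [sqApprox, Function.iterate_fixed hat_zero]

lemma sqApprox_succ (m : ℕ) (t : ℝ) :
    sqApprox (m + 1) t = t - hat t / 2 + sqApprox m (hat t) / 4 := by
  have h (s : ℕ) :
      hat^[s + 1] (hat t) / 4 ^ (s + 1) / 4 = hat^[s + 1 + 1] t / 4 ^ (s + 1 + 1) := by
    rw [Function.iterate_succ_apply _ (s + 1)]; ring
  rw [sqApprox, sqApprox, sum_range_succ', sub_div, sum_div, sum_congr rfl fun s _ => h s]
  simp only [zero_add, pow_one, Function.iterate_one]
  ring

lemma sqApprox_succ_sub_sq (m : ℕ) (t : ℝ) :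
    sqApprox (m + 1) t - t ^ 2 = (sqApprox m (hat t) - hat t ^ 2) / 4 := by
  rw [sqApprox_succ]
  linear_combination -sq_eq_sub_hat_add_sq_hat t

lemma abs_sqApprox_sub_sq_le (m : ℕ) {t : ℝ} (ht : t ∈ Set.Icc (0 : ℝ) 1) :
    |sqApprox m t - t ^ 2| ≤ (1 / 4) ^ (m + 1) := by
  induction m generalizing t with
  | zero =>
    obtain ⟨h0, h1⟩ := ht
    rw [sqApprox_zero_left, abs_le]
    constructor <;> nlinarith [sq_nonneg (t - 1 / 2)]
  | succ m ih =>
    rw [sqApprox_succ_sub_sq, abs_div, abs_of_pos (four_pos : (0 : ℝ) < 4), pow_succ _ (m + 1)]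
    linarith [ih (mapsTo_hat ht)]

lemma abs_sqApprox_sub_sq_sub_le (m : ℕ) {t t' : ℝ} (ht : t ∈ Set.Icc (0 : ℝ) 1)
    (ht' : t' ∈ Set.Icc (0 : ℝ) 1) :
    |(sqApprox m t - t ^ 2) - (sqApprox m t' - t' ^ 2)| ≤ (1 / 2) ^ m * |t - t'| := by
  induction m generalizing t t' with
  | zero =>
    obtain ⟨h0, h1⟩ := ht
    obtain ⟨h0', h1'⟩ := ht'
    have h : |1 - t - t'| ≤ 1 := abs_le.2 ⟨by linarith, by linarith⟩
    rw [sqApprox_zero_left, sqApprox_zero_left,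
      show t - t ^ 2 - (t' - t' ^ 2) = (1 - t - t') * (t - t') by ring, abs_mul, pow_zero,
      one_mul]
    exact mul_le_of_le_one_left (abs_nonneg _) h
  | succ m ih =>
    rw [sqApprox_succ_sub_sq, sqApprox_succ_sub_sq, ← sub_div, abs_div, abs_of_pos (four_pos : (0 : ℝ) < 4)]
    calc _ ≤ (1 / 2) ^ m * |hat t - hat t'| / 4 := by
          gcongr; exact ih (mapsTo_hat ht) (mapsTo_hat ht')
      _ ≤ (1 / 2) ^ m * (2 * |t - t'|) / 4 := by gcongr; exact abs_hat_sub_hat_le t t'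
      _ = (1 / 2) ^ (m + 1) * |t - t'| := by ring

def sqCoeff (s : ℕ) : ℝ := if s = 0 then 1 else -(1 / 4) ^ s

lemma sqApprox_eq_sum (m : ℕ) (t : ℝ) :
    sqApprox m t = ∑ s ∈ range (m + 1), sqCoeff s * hat^[s] t := by
  rw [sum_range_succ', sqApprox, sub_eq_add_neg, ← sum_neg_distrib, add_comm]
  simp only [sqCoeff, if_pos, Nat.add_one_ne_zero, if_false, Function.iterate_zero_apply, one_mul]
  exact congrArg (· + t) (sum_congr rfl fun s _ => by rw [div_pow, one_pow]; ring)

def polarize (M : ℝ) (F : ℝ → ℝ) (x y : ℝ) : ℝ :=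
  2 * M ^ 2 * (F (|x + y| / (2 * M)) - F (|x| / (2 * M)) - F (|y| / (2 * M)))

lemma polarize_sub_mul {M : ℝ} (hM : M ≠ 0) (F : ℝ → ℝ) (x y : ℝ) :
    polarize M F x y - x * y = polarize M (fun t => F t - t ^ 2) x y := by
  simp only [polarize, div_pow, sq_abs]
  field_simp
  ring

lemma polarize_zero_right {F : ℝ → ℝ} (hF : F 0 = 0) (M x : ℝ) : polarize M F x 0 = 0 := by
  simp [polarize, hF]

lemma polarize_zero_left {F : ℝ → ℝ} (hF : F 0 = 0) (M y : ℝ) : polarize M F 0 y = 0 := by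
  simp [polarize, hF]

lemma abs_div_mem_Icc {a z : ℝ} (ha : 0 < a) (hz : |z| ≤ a) : |z| / a ∈ Set.Icc (0 : ℝ) 1 :=
  ⟨by positivity, (div_le_one ha).2 hz⟩

lemma abs_add_le_two_mul {M x y : ℝ} (hx : |x| ≤ M) (hy : |y| ≤ M) : |x + y| ≤ 2 * M := by
  linarith [abs_add_le x y]

lemma abs_abs_div_sub_abs_div_le {a : ℝ} (ha : 0 < a) (u v : ℝ) :
    |(|u| / a - |v| / a)| ≤ |u - v| / a := by
  rw [← sub_div, abs_div, abs_of_pos ha]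
  exact div_le_div_of_nonneg_right (abs_abs_sub_abs_le_abs_sub u v) ha.le

lemma abs_mul_sub_mul_le {M x y x' y' : ℝ} (hx : |x| ≤ M) (hy' : |y'| ≤ M) :
    |x * y - x' * y'| ≤ M * (|x - x'| + |y - y'|) :=
  calc |x * y - x' * y'| = |x * (y - y') + y' * (x - x')| := by ring_nf
    _ ≤ |x| * |y - y'| + |y'| * |x - x'| := by
        rw [← abs_mul, ← abs_mul]; exact abs_add_le _ _
    _ ≤ M * |y - y'| + M * |x - x'| := by gcongr
    _ = M * (|x - x'| + |y - y'|) := by ring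

section Polarize

variable {M : ℝ} {x y x' y' : ℝ}

lemma abs_polarize_le {η : ℝ} {E : ℝ → ℝ} (hM : 0 < M) (hx : |x| ≤ M) (hy : |y| ≤ M)
    (hE : ∀ t ∈ Set.Icc (0 : ℝ) 1, |E t| ≤ η) : |polarize M E x y| ≤ 6 * M ^ 2 * η := by
  have h2M : 0 < 2 * M := by positivity
  have ha := hE _ (abs_div_mem_Icc h2M (abs_add_le_two_mul hx hy))
  have hb := hE _ (abs_div_mem_Icc h2M (by linarith : |x| ≤ 2 * M))
  have hc := hE _ (abs_div_mem_Icc h2M (by linarith : |y| ≤ 2 * M))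
  rw [polarize, abs_mul, abs_of_pos (by positivity : 0 < 2 * M ^ 2)]
  calc _ ≤ 2 * M ^ 2 * (η + η + η) := by
        gcongr
        exact (abs_sub _ _).trans (add_le_add ((abs_sub _ _).trans (add_le_add ha hb)) hc)
    _ = 6 * M ^ 2 * η := by ring

lemma abs_polarize_sub_le {K : ℝ} {E : ℝ → ℝ} (hM : 0 < M) (hK : 0 ≤ K)
    (hx : |x| ≤ M) (hy : |y| ≤ M) (hx' : |x'| ≤ M) (hy' : |y'| ≤ M)
    (hE : ∀ t ∈ Set.Icc (0 : ℝ) 1, ∀ t' ∈ Set.Icc (0 : ℝ) 1, |E t - E t'| ≤ K * |t - t'|) :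
    |polarize M E x y - polarize M E x' y'| ≤ 2 * M * K * (|x - x'| + |y - y'|) := by
  have h2M : 0 < 2 * M := by positivity
  have ha := hE _ (abs_div_mem_Icc h2M (abs_add_le_two_mul hx hy))
    _ (abs_div_mem_Icc h2M (abs_add_le_two_mul hx' hy'))
  have hb := hE _ (abs_div_mem_Icc h2M (by linarith : |x| ≤ 2 * M))
    _ (abs_div_mem_Icc h2M (by linarith : |x'| ≤ 2 * M))
  have hc := hE _ (abs_div_mem_Icc h2M (by linarith : |y| ≤ 2 * M))
    _ (abs_div_mem_Icc h2M (by linarith : |y'| ≤ 2 * M))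
  have da := abs_abs_div_sub_abs_div_le h2M (x + y) (x' + y')
  have db := abs_abs_div_sub_abs_div_le h2M x x'
  have dc := abs_abs_div_sub_abs_div_le h2M y y'
  have dxy : |x + y - (x' + y')| ≤ |x - x'| + |y - y'| := by
    rw [show x + y - (x' + y') = (x - x') + (y - y') by ring]; exact abs_add_le _ _
  rw [polarize, polarize, ← mul_sub, abs_mul, abs_of_pos (by positivity : 0 < 2 * M ^ 2)]
  set a := |x + y| / (2 * M); set a' := |x' + y'| / (2 * M)
  set b := |x| / (2 * M); set b' := |x'| / (2 * M)
  set c := |y| / (2 * M); set c' := |y'| / (2 * M)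
  have hsum : |a - a'| + |b - b'| + |c - c'| ≤ (|x - x'| + |y - y'|) / M := by
    rw [show (|x - x'| + |y - y'|) / M
      = (|x - x'| + |y - y'|) / (2 * M) + |x - x'| / (2 * M) + |y - y'| / (2 * M) by
        field_simp; ring]
    gcongr
    exact da.trans (div_le_div_of_nonneg_right dxy h2M.le)
  calc 2 * M ^ 2 * |(E a - E b - E c) - (E a' - E b' - E c')|
      = 2 * M ^ 2 * |(E a - E a') - (E b - E b') - (E c - E c')| := by ring_nf
    _ ≤ 2 * M ^ 2 * (K * |a - a'| + K * |b - b'| + K * |c - c'|) := by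
        gcongr
        exact (abs_sub _ _).trans (add_le_add ((abs_sub _ _).trans (add_le_add ha hb)) hc)
    _ ≤ 2 * M ^ 2 * (K * ((|x - x'| + |y - y'|) / M)) := by
        gcongr
        linarith [mul_le_mul_of_nonneg_left hsum hK]
    _ = 2 * M * K * (|x - x'| + |y - y'|) := by field_simp

variable (m : ℕ)

lemma abs_polarize_sqApprox_sub_mul_le (hM : 0 < M) (hx : |x| ≤ M) (hy : |y| ≤ M) :
    |polarize M (sqApprox m) x y - x * y| ≤ 6 * M ^ 2 * (1 / 4) ^ (m + 1) := by
  rw [polarize_sub_mul hM.ne']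
  exact abs_polarize_le hM hx hy fun t ht => abs_sqApprox_sub_sq_le m ht

lemma abs_polarize_sqApprox_sub_mul_sub_le (hM : 0 < M) (hx : |x| ≤ M) (hy : |y| ≤ M)
    (hx' : |x'| ≤ M) (hy' : |y'| ≤ M) :
    |(polarize M (sqApprox m) x y - x * y) - (polarize M (sqApprox m) x' y' - x' * y')|
      ≤ 2 * M * (1 / 2) ^ m * (|x - x'| + |y - y'|) := by
  rw [polarize_sub_mul hM.ne', polarize_sub_mul hM.ne']
  exact abs_polarize_sub_le hM (by positivity) hx hy hx' hy'
    fun t ht t' ht' => abs_sqApprox_sub_sq_sub_le m ht ht'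

variable {ε : ℝ} (hM : 1 ≤ M) (hm : 2 * M ^ 2 * (1 / 2) ^ m ≤ ε)
include hM hm

lemma abs_polarize_sqApprox_sub_mul_le_of_le (hx : |x| ≤ M) (hy : |y| ≤ M) :
    |polarize M (sqApprox m) x y - x * y| ≤ ε := by
  have h_half : (1 / 2 : ℝ) ^ m ≤ 1 := pow_le_one₀ (by norm_num) (by norm_num)
  have h_quarter : 6 * M ^ 2 * (1 / 4 : ℝ) ^ (m + 1)
      = 3 / 4 * (1 / 2) ^ m * (2 * M ^ 2 * (1 / 2) ^ m) := by
    rw [pow_succ, show (1 / 4 : ℝ) = 1 / 2 * (1 / 2) by norm_num, mul_pow]; ring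
  calc _ ≤ 6 * M ^ 2 * (1 / 4 : ℝ) ^ (m + 1) :=
        abs_polarize_sqApprox_sub_mul_le m (by linarith) hx hy
    _ = 3 / 4 * (1 / 2) ^ m * (2 * M ^ 2 * (1 / 2) ^ m) := h_quarter
    _ ≤ 1 * ε := by gcongr; linarith
    _ = ε := one_mul ε

lemma abs_polarize_sqApprox_sub_mul_sub_le_of_le (hx : |x| ≤ M) (hy : |y| ≤ M)
    (hx' : |x'| ≤ M) (hy' : |y'| ≤ M) :
    |(polarize M (sqApprox m) x y - x * y) - (polarize M (sqApprox m) x' y' - x' * y')|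
      ≤ ε * (|x - x'| + |y - y'|) := by
  refine (abs_polarize_sqApprox_sub_mul_sub_le m (by linarith) hx hy hx' hy').trans
    (mul_le_mul_of_nonneg_right (hm.trans' ?_) (by positivity))
  have : M ≤ M ^ 2 := by nlinarith
  gcongr

lemma abs_polarize_sqApprox_sub_le (hεM : ε ≤ M) (hx : |x| ≤ M) (hy : |y| ≤ M)
    (hx' : |x'| ≤ M) (hy' : |y'| ≤ M) :
    |polarize M (sqApprox m) x y - polarize M (sqApprox m) x' y'|
      ≤ 2 * M * (|x - x'| + |y - y'|) := by
  have h_err := abs_polarize_sqApprox_sub_mul_sub_le_of_le m hM hm hx hy hx' hy'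
  have h_mul := abs_mul_sub_mul_le (y := y) (x' := x') hx hy'
  calc _ = |((polarize M (sqApprox m) x y - x * y) - (polarize M (sqApprox m) x' y' - x' * y'))
          + (x * y - x' * y')| := by congr 1; ring
    _ ≤ _ := abs_add_le _ _
    _ ≤ 2 * M * (|x - x'| + |y - y'|) := by
        nlinarith [abs_nonneg (x - x'), abs_nonneg (y - y')]

end Polarize

def polarCoeff (c j : ℕ) : ℝ := if c = 0 ∨ c = j + 1 then 1 else 0

def pairWeight (a : ℕ → ℝ) (c j : ℕ) : ℝ := if j / 2 = c then a (j % 2) else 0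

def hatWeight (p : ℕ) : ℝ := if p = 0 then 2 else -4

def outSign (j : ℕ) : ℝ := if j = 0 then 1 else if j = 2 ∨ j = 4 then -1 else 0

/- Layers `1, …, m + 2` consist of three pairs of neurons, pair `c` following
`z_c = polarArg v c ∈ {x + y, x, y}`: layer `1` holds `relu (± z_c)`, and layer `s + 2` holds
`hat^[s] t_c` and `relu (hat^[s] t_c - 1/2)` with `t_c = |z_c| / (2M)`.  The output layer reads
the even neurons of all layers `2, …, m + 2` through skip connections. -/
def mulNet (M : ℝ) (m : ℕ) : NN where
  d := 2
  L := m + 3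
  hL := by omega
  arity l := if l = 0 then 2 else if l = m + 3 then 1 else 6
  harity := rfl
  A l k i j :=
    if l = 1 then (-1) ^ i * polarCoeff (i / 2) j
    else if l = m + 3 then (if 2 ≤ k then 2 * M ^ 2 * sqCoeff (k - 2) * outSign j else 0)
    else if k + 1 = l then
      pairWeight (if l = 2 then fun _ => 1 / (2 * M) else hatWeight) (i / 2) j
    else 0
  b l i := if 2 ≤ l ∧ l ≤ m + 2 then -((i % 2 : ℕ) : ℝ) / 2 else 0

def polarArg (v : ℕ → ℝ) (c : ℕ) : ℝ := ∑ j ∈ range 2, polarCoeff c j * v j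

@[simp] lemma polarArg_zero (v : ℕ → ℝ) : polarArg v 0 = v 0 + v 1 := by
  simp [polarArg, polarCoeff, sum_range_succ]

@[simp] lemma polarArg_one (v : ℕ → ℝ) : polarArg v 1 = v 0 := by
  simp [polarArg, polarCoeff]

@[simp] lemma polarArg_two (v : ℕ → ℝ) : polarArg v 2 = v 1 := by
  simp [polarArg, polarCoeff]

lemma abs_polarArg_le {M : ℝ} {v : ℕ → ℝ} (hx : |v 0| ≤ M) (hy : |v 1| ≤ M) {c : ℕ}
    (hc : c < 3) : |polarArg v c| ≤ 2 * M := by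
  have := abs_add_le (v 0) (v 1)
  interval_cases c <;> simp <;> linarith [abs_nonneg (v 0), abs_nonneg (v 1)]

lemma sum_range_six_pairWeight (a v : ℕ → ℝ) {c : ℕ} (hc : c < 3) :
    ∑ j ∈ range 6, pairWeight a c j * v j = a 0 * v (2 * c) + a 1 * v (2 * c + 1) := by
  interval_cases c <;> simp [sum_range_succ, pairWeight]

lemma sum_range_six_outSign (v : ℕ → ℝ) :
    ∑ j ∈ range 6, outSign j * v j = v 0 - v 2 - v 4 := by
  simp [sum_range_succ, outSign]; ring

lemma relu_add_relu_neg (z : ℝ) : relu z + relu (-z) = |z| := by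
  rcases le_total 0 z with h | h
  · simp [relu, h, abs_of_nonneg h]
  · simp [relu, h, abs_of_nonpos h]

section Architecture

variable (M : ℝ) (m : ℕ)

lemma mulNet_arity_le (l : ℕ) : (mulNet M m).arity l ≤ 6 := by
  simp only [mulNet]; split_ifs <;> omega

lemma mulNet_arity_of_ne {l : ℕ} (h0 : l ≠ 0) (hL : l ≠ m + 3) : (mulNet M m).arity l = 6 := by
  simp [mulNet, h0, hL]

lemma mulNet_arity_last : (mulNet M m).arity (m + 3) = 1 := by simp [mulNet]

lemma mulNet_outDim : (mulNet M m).outDim = 1 := mulNet_arity_last M m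

lemma mulNet_A_eq_zero (i j : ℕ) {l k : ℕ} (h1 : l ≠ 1) (hL : l ≠ m + 3) (hk : k + 1 ≠ l) :
    (mulNet M m).A l k i j = 0 := by
  simp [mulNet, h1, hL, hk]

lemma mulNet_A_two (i j : ℕ) :
    (mulNet M m).A 2 1 i j = pairWeight (fun _ => 1 / (2 * M)) (i / 2) j := by
  simp [mulNet]

lemma mulNet_A_succ (i j : ℕ) {s : ℕ} (hs : s < m) :
    (mulNet M m).A (s + 3) (s + 2) i j = pairWeight hatWeight (i / 2) j := by
  simp [mulNet, hs.ne, show s + 3 ≠ 1 by omega, show s + 3 ≠ 2 by omega]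

lemma mulNet_A_out (i j s : ℕ) :
    (mulNet M m).A (m + 3) (s + 2) i j = 2 * M ^ 2 * sqCoeff s * outSign j := by
  simp [mulNet]

lemma mulNet_A_out_eq_zero (i j : ℕ) {k : ℕ} (hk : k < 2) : (mulNet M m).A (m + 3) k i j = 0 := by
  simp [mulNet, show ¬ 2 ≤ k by omega]

lemma mulNet_numNeurons_le : (mulNet M m).numNeurons ≤ 6 * m + 24 := by
  have := NN.numNeurons_le _ (mulNet_arity_le M m)
  rw [show (mulNet M m).L = m + 3 from rfl] at this
  omega

lemma mulNet_numWeights_le : (mulNet M m).numWeights ≤ 48 * m + 103 := by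
  have h_hidden : ∀ l ∈ Icc 1 (m + 2),
      (∑ k ∈ range l, {p : ℕ × ℕ | p.1 < (mulNet M m).arity l ∧ p.2 < (mulNet M m).arity k ∧
          (mulNet M m).A l k p.1 p.2 ≠ 0}.ncard) +
        {i : ℕ | i < (mulNet M m).arity l ∧ (mulNet M m).b l i ≠ 0}.ncard ≤ 42 := by
    intro l hl
    obtain ⟨hl1, hl2⟩ := mem_Icc.1 hl
    obtain ⟨l, rfl⟩ : ∃ l', l = l' + 1 := ⟨l - 1, by omega⟩
    have h_skip : ∀ k ∈ range l, {p : ℕ × ℕ | p.1 < (mulNet M m).arity (l + 1) ∧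
        p.2 < (mulNet M m).arity k ∧ (mulNet M m).A (l + 1) k p.1 p.2 ≠ 0}.ncard = 0 :=
      fun k hk => NN.ncard_weights_eq_zero _ fun i j =>
        have := mem_range.1 hk
        mulNet_A_eq_zero M m i j (by omega) (by omega) (by omega)
    rw [sum_range_succ, sum_eq_zero h_skip, zero_add]
    have := NN.ncard_weights_le (mulNet M m) (l + 1) l
    have := NN.ncard_biases_le (mulNet M m) (l + 1)
    have := Nat.mul_le_mul (mulNet_arity_le M m (l + 1)) (mulNet_arity_le M m l)
    have := mulNet_arity_le M m (l + 1)
    omega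
  have h_out : (∑ k ∈ range (m + 3), {p : ℕ × ℕ | p.1 < (mulNet M m).arity (m + 3) ∧
        p.2 < (mulNet M m).arity k ∧ (mulNet M m).A (m + 3) k p.1 p.2 ≠ 0}.ncard) +
      {i : ℕ | i < (mulNet M m).arity (m + 3) ∧ (mulNet M m).b (m + 3) i ≠ 0}.ncard
        ≤ 6 * (m + 3) + 1 := by
    have h_block : ∀ k ∈ range (m + 3), {p : ℕ × ℕ | p.1 < (mulNet M m).arity (m + 3) ∧
        p.2 < (mulNet M m).arity k ∧ (mulNet M m).A (m + 3) k p.1 p.2 ≠ 0}.ncard ≤ 6 :=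
      fun k _ => (NN.ncard_weights_le _ _ _).trans <| by
        rw [mulNet_arity_last, one_mul]; exact mulNet_arity_le M m k
    have := sum_le_card_nsmul _ _ _ h_block
    have := NN.ncard_biases_le (mulNet M m) (m + 3)
    simp only [card_range, smul_eq_mul, mulNet_arity_last] at *
    omega
  rw [NN.numWeights, show (mulNet M m).L = m + 2 + 1 from rfl,
    sum_Icc_succ_top (by omega : 1 ≤ m + 2 + 1), show m + 2 + 1 = m + 3 from rfl]
  have := sum_le_card_nsmul _ _ _ h_hidden
  rw [Nat.card_Icc, smul_eq_mul] at this
  omega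

end Architecture

section Realization

variable {M : ℝ} (m : ℕ) {v : ℕ → ℝ}

lemma mulNet_hidden_one (i : ℕ) :
    (mulNet M m).hidden relu v 1 i = relu ((-1) ^ i * polarArg v (i / 2)) := by
  rw [NN.hidden_succ_of_prev _ _ _ fun k hk => absurd hk (Nat.not_lt_zero k)]
  simp [mulNet, polarArg, NN.hidden_zero, sum_range_succ, mul_add, mul_assoc]

lemma mulNet_hidden_one_add (c : ℕ) :
    (mulNet M m).hidden relu v 1 (2 * c) + (mulNet M m).hidden relu v 1 (2 * c + 1)
      = |polarArg v c| := by
  rw [mulNet_hidden_one, mulNet_hidden_one, show (2 * c + 1) / 2 = c by omega,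
    show 2 * c / 2 = c by omega, pow_succ, pow_mul, neg_one_sq, one_pow, one_mul, one_mul,
    neg_one_mul]
  exact relu_add_relu_neg _

lemma mulNet_hidden_eq_sum {s i : ℕ} (hs : s ≤ m) : (mulNet M m).hidden relu v (s + 2) i
      = relu (∑ j ∈ range 6, (mulNet M m).A (s + 2) (s + 1) i j
          * (mulNet M m).hidden relu v (s + 1) j - ((i % 2 : ℕ) : ℝ) / 2) := by
  have hb : (mulNet M m).b (s + 2) i = -((i % 2 : ℕ) : ℝ) / 2 := if_pos ⟨by omega, by omega⟩
  have hprev : ∀ k < s + 1, ∀ j, (mulNet M m).A (s + 1 + 1) k i j = 0 := fun k hk j =>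
    mulNet_A_eq_zero M m i j (by omega) (by omega) (by omega)
  rw [NN.hidden_succ_of_prev _ _ _ hprev, mulNet_arity_of_ne M m (by omega) (by omega), hb,
    neg_div, ← sub_eq_add_neg]

lemma iterate_hat_polarArg_mem_Icc (hM : 0 < M) (hv : ∀ c < 3, |polarArg v c| ≤ 2 * M)
    (s : ℕ) {c : ℕ} (hc : c < 3) : hat^[s] (|polarArg v c| / (2 * M)) ∈ Set.Icc (0 : ℝ) 1 :=
  mapsTo_hat.iterate s (abs_div_mem_Icc (by positivity) (hv c hc))

lemma mulNet_hidden (hM : 0 < M) (hv : ∀ c < 3, |polarArg v c| ≤ 2 * M) {s : ℕ} (hs : s ≤ m)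
    {i : ℕ} (hi : i < 6) : (mulNet M m).hidden relu v (s + 2) i
      = relu (hat^[s] (|polarArg v (i / 2)| / (2 * M)) - ((i % 2 : ℕ) : ℝ) / 2) := by
  induction s generalizing i with
  | zero =>
    rw [mulNet_hidden_eq_sum m hs]
    simp only [zero_add, mulNet_A_two, sum_range_six_pairWeight _ _ (show i / 2 < 3 by omega)]
    rw [← mul_add, mulNet_hidden_one_add, one_div_mul_eq_div, Function.iterate_zero_apply]
  | succ s ih =>
    set u := hat^[s] (|polarArg v (i / 2)| / (2 * M))
    have h_even : (mulNet M m).hidden relu v (s + 2) (2 * (i / 2)) = u := by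
      rw [ih (by omega) (by omega), Nat.mul_div_cancel_left _ two_pos, Nat.mul_mod_right,
        Nat.cast_zero, zero_div, sub_zero, relu,
        max_eq_right (iterate_hat_polarArg_mem_Icc hM hv s (by omega)).1]
    have h_odd : (mulNet M m).hidden relu v (s + 2) (2 * (i / 2) + 1) = relu (u - 1 / 2) := by
      rw [ih (by omega) (by omega), show (2 * (i / 2) + 1) / 2 = i / 2 by omega,
        show (2 * (i / 2) + 1) % 2 = 1 by omega, Nat.cast_one]
    have h_step : hat^[s + 1] (|polarArg v (i / 2)| / (2 * M)) = hat u :=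
      Function.iterate_succ_apply' _ _ _
    rw [mulNet_hidden_eq_sum m hs]
    simp only [mulNet_A_succ M m i _ (show s < m by omega),
      sum_range_six_pairWeight _ _ (show i / 2 < 3 by omega), h_even, h_odd, hatWeight,
      if_pos, one_ne_zero, if_false]
    rw [h_step, ← two_mul_sub_four_mul_relu]
    ring_nf

lemma mulNet_hidden_even (hM : 0 < M) (hv : ∀ c < 3, |polarArg v c| ≤ 2 * M) {s : ℕ}
    (hs : s ≤ m) {c : ℕ} (hc : c < 3) :
    (mulNet M m).hidden relu v (s + 2) (2 * c) = hat^[s] (|polarArg v c| / (2 * M)) := by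
  rw [mulNet_hidden m hM hv hs (by omega), Nat.mul_div_cancel_left _ two_pos, Nat.mul_mod_right,
    Nat.cast_zero, zero_div, sub_zero, relu,
    max_eq_right (iterate_hat_polarArg_mem_Icc hM hv s hc).1]

lemma mulNet_realize (hM : 0 < M) (hx : |v 0| ≤ M) (hy : |v 1| ≤ M) :
    (mulNet M m).realize relu v 0 = polarize M (sqApprox m) (v 0) (v 1) := by
  have hv : ∀ c < 3, |polarArg v c| ≤ 2 * M := fun c hc => abs_polarArg_le hx hy hc
  have h_layer (s : ℕ) (hs : s ∈ range (m + 1)) :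
      ∑ j ∈ range ((mulNet M m).arity (s + 2)),
        (mulNet M m).A (m + 3) (s + 2) 0 j * (mulNet M m).hidden relu v (s + 2) j
      = 2 * M ^ 2 * (sqCoeff s * hat^[s] (|v 0 + v 1| / (2 * M))
          - sqCoeff s * hat^[s] (|v 0| / (2 * M)) - sqCoeff s * hat^[s] (|v 1| / (2 * M))) := by
    have hs : s ≤ m := Nat.lt_succ_iff.1 (mem_range.1 hs)
    have h0 : (mulNet M m).hidden relu v (s + 2) 0 = hat^[s] (|v 0 + v 1| / (2 * M)) := by
      simpa using mulNet_hidden_even m hM hv hs (c := 0) (by omega)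
    have h2 : (mulNet M m).hidden relu v (s + 2) 2 = hat^[s] (|v 0| / (2 * M)) := by
      simpa using mulNet_hidden_even m hM hv hs (c := 1) (by omega)
    have h4 : (mulNet M m).hidden relu v (s + 2) 4 = hat^[s] (|v 1| / (2 * M)) := by
      simpa using mulNet_hidden_even m hM hv hs (c := 2) (by omega)
    rw [mulNet_arity_of_ne M m (show s + 2 ≠ 0 by omega) (show s + 2 ≠ m + 3 by omega)]
    simp only [mulNet_A_out, mul_assoc, ← mul_sum, sum_range_six_outSign, h0, h2, h4]
    ring
  have h_out : (mulNet M m).realize relu v 0 = ∑ s ∈ range (m + 1),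
      ∑ j ∈ range ((mulNet M m).arity (s + 2)),
        (mulNet M m).A (m + 3) (s + 2) 0 j * (mulNet M m).hidden relu v (s + 2) j := by
    have hb : (mulNet M m).b (m + 3) 0 = 0 := if_neg (by omega)
    rw [NN.realize_eq_sum, show (mulNet M m).L = m + 3 from rfl, sum_range_succ',
      sum_range_succ', hb, add_zero]
    simp [mulNet_A_out_eq_zero]
  rw [h_out, sum_congr rfl h_layer, ← mul_sum, sum_sub_distrib, sum_sub_distrib, polarize,
    sqApprox_eq_sum, sqApprox_eq_sum, sqApprox_eq_sum]

end Realization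

lemma exists_half_pow_le {δ : ℝ} (hδ : 0 < δ) (hδ1 : δ ≤ 1) :
    ∃ m : ℕ, (1 / 2 : ℝ) ^ m ≤ δ ∧ (m : ℝ) ≤ Real.logb 2 (1 / δ) + 1 := by
  have hlog : 0 ≤ Real.logb 2 (1 / δ) :=
    Real.logb_nonneg one_lt_two (by rw [le_div_iff₀ hδ]; linarith)
  refine ⟨⌈Real.logb 2 (1 / δ)⌉₊, ?_, (Nat.ceil_lt_add_one hlog).le⟩
  have h := (Real.logb_le_iff_le_rpow one_lt_two (by positivity)).1
    (Nat.le_ceil (Real.logb 2 (1 / δ)))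
  rw [Real.rpow_natCast] at h
  rw [div_pow, one_pow, div_le_iff₀ (by positivity)]
  rwa [div_le_iff₀ hδ, mul_comm] at h

end MulNet

/-- **Approximate multiplication network in `W^{1,∞}`.**
For every `M ≥ 1` there are constants `c, c₁, c₂ > 0` such that for every
`ε ∈ (0,1/2)` there is a ReLU network with two-dimensional input and one-dimensional
output whose realization `h` approximates the product `x·y` on `[−M,M]²` up to `ε` in
the uniform norm, with `h − x·y` being `ε`-Lipschitz in the `ℓ¹`-norm, `h` vanishing
when one input vanishes, `h` being `c·M`-Lipschitz in the `ℓ¹`-norm, and the number of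
layers, neurons and weights each bounded by `c₁·log₂(1/ε) + c₂`. -/
theorem multiplication_network (M : ℝ) (hM : 1 ≤ M) :
    ∃ c c₁ c₂ : ℝ, 0 < c ∧ 0 < c₁ ∧ 0 < c₂ ∧
      ∀ ε ∈ Set.Ioo (0 : ℝ) (1 / 2),
        ∃ Φ : NN, Φ.d = 2 ∧ Φ.outDim = 1 ∧
          ∀ h : ℝ → ℝ → ℝ,
            (h = fun x y => Φ.realize relu (fun i => if i = 0 then x else y) 0) →
            (∀ x ∈ Set.Icc (-M) M, ∀ y ∈ Set.Icc (-M) M,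
              |h x y - x * y| ≤ ε) ∧
            (∀ x ∈ Set.Icc (-M) M, ∀ y ∈ Set.Icc (-M) M,
              ∀ x' ∈ Set.Icc (-M) M, ∀ y' ∈ Set.Icc (-M) M,
                |(h x y - x * y) - (h x' y' - x' * y')| ≤
                  ε * (|x - x'| + |y - y'|)) ∧
            (∀ x ∈ Set.Icc (-M) M, h x 0 = 0 ∧ h 0 x = 0) ∧
            (∀ x ∈ Set.Icc (-M) M, ∀ y ∈ Set.Icc (-M) M,
              ∀ x' ∈ Set.Icc (-M) M, ∀ y' ∈ Set.Icc (-M) M,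
                |h x y - h x' y'| ≤ c * M * (|x - x'| + |y - y'|)) ∧
            (Φ.L : ℝ) ≤ c₁ * Real.logb 2 (1 / ε) + c₂ ∧
            (Φ.numNeurons : ℝ) ≤ c₁ * Real.logb 2 (1 / ε) + c₂ ∧
            (Φ.numWeights : ℝ) ≤ c₁ * Real.logb 2 (1 / ε) + c₂ := by
  have hM0 : 0 < M := by linarith
  have hlogM : 0 ≤ Real.logb 2 (2 * M ^ 2) := Real.logb_nonneg one_lt_two (by nlinarith)
  refine ⟨2, 48, 48 * (Real.logb 2 (2 * M ^ 2) + 1) + 103, two_pos, by norm_num, by positivity,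
    fun ε ⟨hε0, hε⟩ => ?_⟩
  obtain ⟨m, hδ, hm⟩ := MulNet.exists_half_pow_le (δ := ε / (2 * M ^ 2)) (by positivity)
    ((div_le_one (by positivity)).2 (by nlinarith))
  rw [le_div_iff₀ (by positivity), mul_comm] at hδ
  rw [one_div_div, div_eq_mul_one_div, Real.logb_mul (by positivity) (by positivity)] at hm
  have h_size (n : ℕ) (hn : n ≤ 48 * m + 103) :
      (n : ℝ) ≤ 48 * Real.logb 2 (1 / ε) + (48 * (Real.logb 2 (2 * M ^ 2) + 1) + 103) := by
    have : (n : ℝ) ≤ 48 * m + 103 := by exact_mod_cast hn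
    linarith
  refine ⟨MulNet.mulNet M m, rfl, MulNet.mulNet_outDim M m, fun h hh => ?_⟩
  have h_eq : ∀ x ∈ Set.Icc (-M) M, ∀ y ∈ Set.Icc (-M) M,
      h x y = MulNet.polarize M (MulNet.sqApprox m) x y := fun x hx y hy => by
    rw [hh]
    exact MulNet.mulNet_realize m hM0 (by simpa using abs_le.2 hx) (by simpa using abs_le.2 hy)
  have h0 : (0 : ℝ) ∈ Set.Icc (-M) M := ⟨by linarith, by linarith⟩
  refine ⟨fun x hx y hy => ?_, fun x hx y hy x' hx' y' hy' => ?_, fun x hx => ?_,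
    fun x hx y hy x' hx' y' hy' => ?_, h_size (m + 3) (by omega),
    h_size _ ((MulNet.mulNet_numNeurons_le M m).trans (by omega)),
    h_size _ (MulNet.mulNet_numWeights_le M m)⟩
  · rw [h_eq x hx y hy]
    exact MulNet.abs_polarize_sqApprox_sub_mul_le_of_le m hM hδ (abs_le.2 hx) (abs_le.2 hy)
  · rw [h_eq x hx y hy, h_eq x' hx' y' hy']
    exact MulNet.abs_polarize_sqApprox_sub_mul_sub_le_of_le m hM hδ (abs_le.2 hx) (abs_le.2 hy)
      (abs_le.2 hx') (abs_le.2 hy')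
  · rw [h_eq x hx 0 h0, h_eq 0 h0 x hx]
    exact ⟨MulNet.polarize_zero_right (MulNet.sqApprox_zero_right m) M x,
      MulNet.polarize_zero_left (MulNet.sqApprox_zero_right m) M x⟩
  · rw [h_eq x hx y hy, h_eq x' hx' y' hy']
    exact MulNet.abs_polarize_sqApprox_sub_le m hM hδ (by linarith) (abs_le.2 hx) (abs_le.2 hy)
      (abs_le.2 hx') (abs_le.2 hy')

end
end

section
/- Let d, N ∈ ℕ and let φ_m for m ∈ {0,1,…,N}^d be the functions defined in the context. Then: (1) 0 ≤ φ_m(x) ≤ 1 for all m and all x ∈ ℝ^d; (2) Σ_{m∈{0,…,N}^d} φ_m(x) = 1 for every x ∈ [0,1]^d; (3) φ_m(x) = 0 whenever ‖x − m/N‖_{ℓ∞} ≥ 1/N; and (4) φ_m is 3N-Lipschitz on ℝ^d with respect to the ℓ¹-norm. -/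
noncomputable section

open Finset

section Aux

lemma bump_nonneg (x : ℝ) : 0 ≤ bump x := by
  unfold bump; split_ifs with h1 h2
  · norm_num
  · linarith
  · exact le_rfl

lemma bump_le_one (x : ℝ) : bump x ≤ 1 := by
  unfold bump; split_ifs with h1 h2
  · exact le_rfl
  · push_neg at h1; linarith
  · norm_num

lemma bump_eq_zero {x : ℝ} (h : 2 < |x|) : bump x = 0 := by
  unfold bump; split_ifs with h1 h2
  · linarith [abs_nonneg x]
  · linarith
  · rfl

lemma bump_eq_min (x : ℝ) : bump x = min 1 (max 0 (2 - |x|)) := by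
  unfold bump; split_ifs with h1 h2
  · rw [max_eq_right, min_eq_left] <;> linarith
  · push_neg at h1
    rw [max_eq_right, min_eq_right] <;> linarith
  · push_neg at h1 h2
    rw [max_eq_left, min_eq_right] <;> linarith

lemma bump_lip (x y : ℝ) : |bump x - bump y| ≤ |x - y| := by
  rw [bump_eq_min, bump_eq_min]
  refine (abs_min_sub_min_le_max _ _ _ _).trans (max_le (by simp [abs_nonneg]) ?_)
  refine (abs_max_sub_max_le_max _ _ _ _).trans (max_le (by simp [abs_nonneg]) ?_)
  have : (2 - |x|) - (2 - |y|) = |y| - |x| := by ring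
  rw [this]
  exact (abs_abs_sub_abs_le_abs_sub y x).trans (abs_sub_comm y x).le

lemma abs_prod_sub_prod_le {ι : Type*} (s : Finset ι) (f g : ι → ℝ)
    (hf0 : ∀ i ∈ s, 0 ≤ f i) (hf1 : ∀ i ∈ s, f i ≤ 1)
    (hg0 : ∀ i ∈ s, 0 ≤ g i) (hg1 : ∀ i ∈ s, g i ≤ 1) :
    |∏ i ∈ s, f i - ∏ i ∈ s, g i| ≤ ∑ i ∈ s, |f i - g i| := by
  classical
  induction s using Finset.induction with
  | empty => simp
  | @insert a s ha ih =>
      simp only [Finset.prod_insert ha, Finset.sum_insert ha]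
      have hfmem : ∀ i ∈ s, 0 ≤ f i := fun i hi => hf0 i (Finset.mem_insert_of_mem hi)
      have hP0 : 0 ≤ ∏ i ∈ s, f i := Finset.prod_nonneg hfmem
      have hP1 : ∏ i ∈ s, f i ≤ 1 :=
        Finset.prod_le_one hfmem (fun i hi => hf1 i (Finset.mem_insert_of_mem hi))
      have hga0 : 0 ≤ g a := hg0 a (Finset.mem_insert_self a s)
      have hga1 : g a ≤ 1 := hg1 a (Finset.mem_insert_self a s)
      have key : f a * ∏ i ∈ s, f i - g a * ∏ i ∈ s, g i
          = (f a - g a) * ∏ i ∈ s, f i + g a * (∏ i ∈ s, f i - ∏ i ∈ s, g i) := by ring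
      rw [key]
      refine (abs_add_le _ _).trans ?_
      rw [abs_mul, abs_mul, abs_of_nonneg hga0]
      have h1 : |f a - g a| * |∏ i ∈ s, f i| ≤ |f a - g a| * 1 :=
        mul_le_mul_of_nonneg_left (by rw [abs_of_nonneg hP0]; exact hP1) (abs_nonneg _)
      have ihs : |∏ i ∈ s, f i - ∏ i ∈ s, g i| ≤ ∑ i ∈ s, |f i - g i| :=
        ih (fun i hi => hf0 i (Finset.mem_insert_of_mem hi))
          (fun i hi => hf1 i (Finset.mem_insert_of_mem hi))
          (fun i hi => hg0 i (Finset.mem_insert_of_mem hi))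
          (fun i hi => hg1 i (Finset.mem_insert_of_mem hi))
      have h2 : g a * |∏ i ∈ s, f i - ∏ i ∈ s, g i| ≤ 1 * ∑ i ∈ s, |f i - g i| :=
        mul_le_mul hga1 ihs (abs_nonneg _) zero_le_one
      nlinarith [abs_nonneg (f a - g a)]

lemma bump_add (f : ℝ) (h0 : 0 ≤ f) (h1 : f < 1) :
    bump (3 * f) + bump (3 * f - 3) = 1 := by
  have ha : |3 * f| = 3 * f := abs_of_nonneg (by linarith)
  have hb : |3 * f - 3| = 3 - 3 * f := by rw [abs_of_nonpos (by linarith)]; ring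
  unfold bump
  rw [ha, hb]
  split_ifs <;> linarith

lemma one_dim (N : ℕ) (hN : 0 < N) (t : ℝ) (ht0 : 0 ≤ t) (ht1 : t ≤ 1) :
    ∑ k ∈ Finset.range (N + 1), bump (3 * N * (t - k / N)) = 1 := by
  have hNR : (0 : ℝ) < N := by exact_mod_cast hN
  set s : ℝ := N * t with hs
  have hrw : ∀ k : ℕ, 3 * (N : ℝ) * (t - k / N) = 3 * (s - k) := by
    intro k; field_simp [hs]; ring
  have hs0 : 0 ≤ s := mul_nonneg hNR.le ht0
  have hsN : s ≤ N := by
    calc s ≤ N * 1 := by exact mul_le_mul_of_nonneg_left ht1 hNR.le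
    _ = N := mul_one _
  set k0 : ℕ := ⌊s⌋.toNat with hk0
  have hfl : (⌊s⌋ : ℝ) ≤ s := Int.floor_le s
  have hfl0 : 0 ≤ ⌊s⌋ := Int.floor_nonneg.mpr hs0
  have hk0c : (k0 : ℝ) = (⌊s⌋ : ℝ) := by rw [hk0]; exact_mod_cast Int.toNat_of_nonneg hfl0
  have hle : (k0 : ℝ) ≤ s := by rw [hk0c]; exact hfl
  have hlt : s < (k0 : ℝ) + 1 := by rw [hk0c]; exact_mod_cast Int.lt_floor_add_one s
  have hk0N : k0 ≤ N := by
    by_contra h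
    push_neg at h
    have : (N : ℝ) + 1 ≤ (k0 : ℝ) := by exact_mod_cast h
    linarith
  have hzero : ∀ k ∈ Finset.range (N + 1), bump (3 * N * (t - k / N)) ≠ 0 →
      (k = k0 ∨ k = k0 + 1) := by
    intro k _ hne
    rw [hrw k] at hne
    by_contra h
    push_neg at h
    obtain ⟨h1, h2⟩ := h
    apply hne
    apply bump_eq_zero
    rcases lt_or_ge k k0 with hk | hk
    · have : (k : ℝ) ≤ (k0 : ℝ) - 1 := by
        have : k + 1 ≤ k0 := hk
        have := (Nat.cast_le (α := ℝ)).mpr this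
        push_cast at this ⊢; linarith
      rw [abs_of_nonneg (by linarith)]
      linarith
    · have hk2 : k0 + 2 ≤ k := by omega
      have : (k0 : ℝ) + 2 ≤ (k : ℝ) := by exact_mod_cast hk2
      rw [abs_of_nonpos (by linarith)]
      linarith
  rw [← Finset.sum_filter_of_ne hzero]
  rcases eq_or_lt_of_le hk0N with hE | hlt'
  · -- k0 = N, so s = N and fractional part is 0
    have hsk0 : s = k0 := by
      have : (k0 : ℝ) = (N : ℝ) := by exact_mod_cast hE
      linarith [this ▸ hsN, hle]
    have hfilter : (Finset.range (N + 1)).filter (fun k => k = k0 ∨ k = k0 + 1) = {k0} := by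
      ext k
      simp only [Finset.mem_filter, Finset.mem_range, Finset.mem_singleton]
      omega
    rw [hfilter, Finset.sum_singleton, hrw, hsk0]
    simp [bump]
  · have hfilter : (Finset.range (N + 1)).filter (fun k => k = k0 ∨ k = k0 + 1)
        = {k0, k0 + 1} := by
      ext k
      simp only [Finset.mem_filter, Finset.mem_range, Finset.mem_insert, Finset.mem_singleton]
      omega
    rw [hfilter, Finset.sum_pair (by omega), hrw, hrw]
    have e1 : 3 * (s - k0) = 3 * (s - k0) := rfl
    have e2 : 3 * (s - (k0 + 1 : ℕ)) = 3 * (s - k0) - 3 := by push_cast; ring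
    rw [e2]
    exact bump_add (s - k0) (by linarith) (by linarith)

end Aux

/-- **Partition of unity.**
The functions `φ_m`, `m ∈ {0,…,N}^d`, take values in `[0,1]`, sum to `1` on `[0,1]^d`,
are supported in the `ℓ∞`-ball of radius `1/N` around `m/N`, and are `3N`-Lipschitz
with respect to the `ℓ¹`-norm. -/
theorem partition_of_unity (d N : ℕ) (hd : 0 < d) (hN : 0 < N) :
    (∀ m : Fin d → ℕ, (∀ l, m l ≤ N) → ∀ x : Fin d → ℝ,
      0 ≤ pou d N m x ∧ pou d N m x ≤ 1) ∧
    (∀ x : Fin d → ℝ, x ∈ cube d →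
      ∑ m : Fin d → Fin (N + 1), pou d N (fun l => (m l : ℕ)) x = 1) ∧
    (∀ m : Fin d → ℕ, (∀ l, m l ≤ N) → ∀ x : Fin d → ℝ,
      (∃ l, (1 : ℝ) / N ≤ |x l - (m l : ℝ) / N|) → pou d N m x = 0) ∧
    (∀ m : Fin d → ℕ, (∀ l, m l ≤ N) → ∀ x y : Fin d → ℝ,
      |pou d N m x - pou d N m y| ≤ 3 * N * ∑ l, |x l - y l|) := by
  have hNR : (0 : ℝ) < N := by exact_mod_cast hN
  refine ⟨?_, ?_, ?_, ?_⟩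
  · intro m _ x
    constructor
    · exact Finset.prod_nonneg fun l _ => bump_nonneg _
    · exact Finset.prod_le_one (fun l _ => bump_nonneg _) (fun l _ => bump_le_one _)
  · intro x hx
    unfold pou
    have := Finset.prod_univ_sum (fun _ : Fin d => (Finset.univ : Finset (Fin (N + 1))))
      (fun l (k : Fin (N + 1)) => bump (3 * N * (x l - (k : ℕ) / N)))
    rw [Fintype.piFinset_univ] at this
    rw [← this]
    refine Finset.prod_eq_one fun l _ => ?_
    rw [Fin.sum_univ_eq_sum_range (fun k => bump (3 * N * (x l - (k : ℕ) / N)))]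
    exact one_dim N hN (x l) (hx l).1 (hx l).2
  · intro m _ x ⟨l, hl⟩
    refine Finset.prod_eq_zero (Finset.mem_univ l) ?_
    apply bump_eq_zero
    rw [abs_mul, abs_of_nonneg (by positivity : (0:ℝ) ≤ 3 * N)]
    have : (1 : ℝ) / N * (3 * N) ≤ |x l - (m l : ℝ) / N| * (3 * N) :=
      mul_le_mul_of_nonneg_right hl (by positivity)
    have h3 : (1 : ℝ) / N * (3 * N) = 3 := by field_simp
    linarith
  · intro m _ x y
    unfold pou
    refine (abs_prod_sub_prod_le Finset.univ _ _
      (fun l _ => bump_nonneg _) (fun l _ => bump_le_one _)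
      (fun l _ => bump_nonneg _) (fun l _ => bump_le_one _)).trans ?_
    rw [Finset.mul_sum]
    refine Finset.sum_le_sum fun l _ => ?_
    refine (bump_lip _ _).trans ?_
    have : 3 * (N:ℝ) * (x l - m l / N) - 3 * N * (y l - m l / N) = 3 * N * (x l - y l) := by
      ring
    rw [this, abs_mul, abs_of_nonneg (by positivity : (0:ℝ) ≤ 3 * (N:ℝ))]

end
end
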